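/- arXiv:2510.08103 — 3 statements merged into one kernel-verified Lean document; each statement's English description precedes it below -/
import Mathlib

section
/- Let i ∈ I and θ = (θ_i) ∈ ℝ^I with θ_i < 0. Then for every θ-stable point of P_{v,w} and every a ∈ ℤ, the linear map Φ_i^a : D_i^a → V_i^{a+d_{ii}} is surjective. -/
/- Common setup: (graded, generalized) quiver varieties attached to a symmetrized
Cartan matrix, following Neguț, "Extremal monomials of q-characters". -/

open Module LinearMap Finset

namespace QChar

variable {I : Type} [Fintype I] [DecidableEq I]

/-- The Cartan integer `c_{ij} = 2 d_{ij} / d_{ii}`. -/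
def cc (d : I → I → ℤ) (i j : I) : ℤ := 2 * d i j / d i i

/-- `d_i = d_{ii} / 2`. -/
def dl (d : I → I → ℤ) (i : I) : ℤ := d i i / 2

/-- The number `−c_{ij}` (as a natural number), i.e. the cardinality of `L(i,j)`. -/
def cnat (d : I → I → ℤ) (i j : I) : ℕ := (-(cc d i j)).toNat

/-- The assumptions on the symmetrized Cartan matrix `d = (d_{ij})`. -/
structure CartanData (d : I → I → ℤ) : Prop where
  symm : ∀ i j, d i j = d j i
  pos : ∀ i, 0 < d i i
  even : ∀ i, Even (d i i)
  offdiag : ∀ i j, i ≠ j → d i j ≤ 0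
  dvd : ∀ i j, d i i ∣ 2 * d i j

/-- `ℓ`-fold composition of a linear endomap (the maps `x_{i,i}^{(ℓ),a}`). -/
def lpow {M : Type} [AddCommGroup M] [Module ℂ M] (f : M →ₗ[ℂ] M) : ℕ → M →ₗ[ℂ] M
  | 0 => LinearMap.id
  | n + 1 => f ∘ₗ lpow f n

section Rep

variable (d : I → I → ℤ) (v w : I → ℤ → ℕ)
    (Vt : I → Type) [∀ i, AddCommGroup (Vt i)] [∀ i, Module ℂ (Vt i)]
    (Wt : I → Type) [∀ i, AddCommGroup (Wt i)] [∀ i, Module ℂ (Wt i)]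
    (Vg : ∀ i : I, ℤ → Submodule ℂ (Vt i)) (Wg : ∀ i : I, ℤ → Submodule ℂ (Wt i))
    (x : ∀ j i : I, Vt i →ₗ[ℂ] Vt j) (A : ∀ i : I, Wt i →ₗ[ℂ] Vt i)
    (B : ∀ i : I, Vt i →ₗ[ℂ] Wt i)

/-- A point of `P_{v,w}` : each total space `Vt i = ⊕_a V_i^a`, `Wt i = ⊕_a W_i^a` is the
internal direct sum of its graded pieces, `dim V_i^a = v_i^a`, `dim W_i^a = w_i^a`, the maps
`x_{j,i} : V_i^a → V_j^{a-d_{ij}}`, `A_i : W_i^a → V_i^{a+d_i}`, `B_i : V_i^{a-d_i} → W_i^a`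
respect the gradings, and the relations (R1), (R2), (R3), (R4) hold. -/
def IsRep : Prop :=
  (∀ i, FiniteDimensional ℂ (Vt i)) ∧
  (∀ i, FiniteDimensional ℂ (Wt i)) ∧
  (∀ i, DirectSum.IsInternal (Vg i)) ∧
  (∀ i, DirectSum.IsInternal (Wg i)) ∧
  (∀ i a, Module.finrank ℂ (Vg i a) = v i a) ∧
  (∀ i a, Module.finrank ℂ (Wg i a) = w i a) ∧
  (∀ j i a, (Vg i a).map (x j i) ≤ Vg j (a - d i j)) ∧
  (∀ i a, (Wg i a).map (A i) ≤ Vg i (a + dl d i)) ∧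
  (∀ i a, (Vg i a).map (B i) ≤ Wg i (a + dl d i)) ∧
  (∀ i j, i ≠ j →
    lpow (x j j) (cnat d j i) ∘ₗ x j i + x j i ∘ₗ lpow (x i i) (cnat d i j) = 0) ∧
  (∀ i, (∑ j ∈ Finset.univ.erase i, ∑ ℓ ∈ Finset.range (cnat d i j),
      lpow (x i i) (cnat d i j - 1 - ℓ) ∘ₗ x i j ∘ₗ x j i ∘ₗ lpow (x i i) ℓ)
      + A i ∘ₗ B i = 0) ∧
  (∀ i, x i i ∘ₗ A i = 0) ∧
  (∀ i, B i ∘ₗ x i i = 0)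

/-- A subrepresentation: subspaces `U_i^a ⊆ V_i^a` preserved by all the maps `x`. -/
def IsSubrep (U : ∀ i : I, ℤ → Submodule ℂ (Vt i)) : Prop :=
  (∀ i a, U i a ≤ Vg i a) ∧ (∀ j i a, (U i a).map (x j i) ≤ U j (a - d i j))

/-- The pairing `(θ, u) = ∑_i d_i θ_i u_i`, where `u_i = ∑_a u_i^a`. -/
noncomputable def pairθ (d : I → I → ℤ) (θ : I → ℝ) (u : I → ℤ → ℤ) : ℝ :=
  ∑ i : I, (dl d i : ℝ) * θ i * ∑ᶠ a : ℤ, (u i a : ℝ)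

/-- The dimension vector of a collection of subspaces. -/
noncomputable def dimv (U : ∀ i : I, ℤ → Submodule ℂ (Vt i)) : I → ℤ → ℤ :=
  fun i a => (Module.finrank ℂ (U i a) : ℤ)

/-- `θ`-stability: subrepresentations contained in `Ker B` pair nonpositively with `θ`, and
subrepresentations containing `Im A` satisfy `(θ, v - dim U) ≥ 0`. -/
def IsStable (θ : I → ℝ) : Prop :=
  (∀ U : ∀ i : I, ℤ → Submodule ℂ (Vt i), IsSubrep d Vt Vg x U →
    (∀ i a, (U i a).map (B i) = ⊥) → pairθ d θ (dimv Vt U) ≤ 0) ∧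
  (∀ U : ∀ i : I, ℤ → Submodule ℂ (Vt i), IsSubrep d Vt Vg x U →
    (∀ i a, (Wg i a).map (A i) ≤ U i (a + dl d i)) →
    0 ≤ pairθ d θ (fun i a => (v i a : ℤ) - dimv Vt U i a))

/-- The map `Φ_i : D_i → V_i` (all `Φ_i^a` at once); the component of the domain indexed by
`(j, k)` (with `k + 1` running through `1, …, −c_{ij}`) is the summand `V_j^{a+ℓ d_{ii}}` of
`D_i^a`, where `ℓ = c_{ij}/2 + (k+1) ∈ L(i,j)`. -/
noncomputable def Phi (i : I) :
    (Wt i × ((j : I) → Fin (cnat d i j) → Vt j)) →ₗ[ℂ] Vt i :=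
  A i ∘ₗ LinearMap.fst ℂ (Wt i) ((j : I) → Fin (cnat d i j) → Vt j) +
  ∑ j : I, ∑ k : Fin (cnat d i j),
    lpow (x i i) (k : ℕ) ∘ₗ x i j ∘ₗ LinearMap.proj k ∘ₗ LinearMap.proj j ∘ₗ
      LinearMap.snd ℂ (Wt i) ((j' : I) → Fin (cnat d i j') → Vt j')

/-- The graded piece `D_i^a = W_i^{a+d_i} ⊕ ⨁_{j≠i} ⨁_{ℓ∈L(i,j)} V_j^{a+ℓd_{ii}}` of the
domain of `Φ_i`. -/
def Dg (i : I) (a : ℤ) :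
    Submodule ℂ (Wt i × ((j : I) → Fin (cnat d i j) → Vt j)) :=
  (Wg i (a + dl d i)).prod
    (Submodule.pi Set.univ fun j => Submodule.pi Set.univ fun k : Fin (cnat d i j) =>
      Vg j (a + d i j + ((k : ℤ) + 1) * d i i))

/-- The map `Ψ_i : V_i → D_i` (all `Ψ_i^a` at once). -/
noncomputable def Psi (i : I) :
    Vt i →ₗ[ℂ] (Wt i × ((j : I) → Fin (cnat d i j) → Vt j)) :=
  LinearMap.prod (B i)
    (LinearMap.pi fun j => LinearMap.pi fun k : Fin (cnat d i j) =>
      x j i ∘ₗ lpow (x i i) (cnat d i j - 1 - (k : ℕ)))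

/-- The map `Υ_i : D_i → D_i` (all `Υ_i^a : D_i^a → D_i^{a - d_{ii}}` at once). -/
noncomputable def Ups (i : I) :
    (Wt i × ((j : I) → Fin (cnat d i j) → Vt j)) →ₗ[ℂ]
      (Wt i × ((j : I) → Fin (cnat d i j) → Vt j)) :=
  LinearMap.prod 0
    (LinearMap.pi fun j => LinearMap.pi fun k : Fin (cnat d i j) =>
      if (k : ℕ) = 0 then
        -(lpow (x j j) (cnat d j i) ∘ₗ
          LinearMap.proj (⟨cnat d i j - 1, Nat.sub_lt k.pos Nat.one_pos⟩ : Fin (cnat d i j)) ∘ₗ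
          LinearMap.proj j ∘ₗ
          LinearMap.snd ℂ (Wt i) ((j' : I) → Fin (cnat d i j') → Vt j'))
      else
        LinearMap.proj (⟨(k : ℕ) - 1, lt_of_le_of_lt (Nat.sub_le _ _) k.isLt⟩ :
            Fin (cnat d i j)) ∘ₗ
          LinearMap.proj j ∘ₗ
          LinearMap.snd ℂ (Wt i) ((j' : I) → Fin (cnat d i j') → Vt j'))

/-- The (ambient representative of the) map `x̄_{j,i} : V̄_i^a → V_j^{a-d_{ij}}`, i.e. the
projection of `D_i^a` onto its summand `V_j^{a-d_{ij}}` (the one with `ℓ = -c_{ij}/2`). -/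
noncomputable def prj (i j : I) :
    (Wt i × ((j' : I) → Fin (cnat d i j') → Vt j')) →ₗ[ℂ] Vt j :=
  if h : 0 < cnat d i j then
    LinearMap.proj (⟨cnat d i j - 1, Nat.sub_lt h Nat.one_pos⟩ : Fin (cnat d i j)) ∘ₗ
      LinearMap.proj j ∘ₗ LinearMap.snd ℂ (Wt i) ((j' : I) → Fin (cnat d i j') → Vt j')
  else 0

/-- The operation `S_i` on dimension vectors (depending on `w`), cf. the braid group action
on monomials. -/
def SS (d : I → I → ℤ) (w : I → ℤ → ℕ) (i : I) (u : I → ℤ → ℤ) : I → ℤ → ℤ := fun j a =>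
  if j = i then
    (w i (a + dl d i) : ℤ) +
      (∑ j' ∈ Finset.univ.erase i, ∑ k ∈ Finset.range (cnat d i j'),
        u j' (a + d i j' + ((k : ℤ) + 1) * d i i)) -
      u i (a + d i i)
  else u j a

/-- The simple reflection `s_i` on stability parameters. -/
def sref (d : I → I → ℤ) (i : I) (θ : I → ℝ) : I → ℝ := fun j => θ j - (cc d j i : ℝ) * θ i

/-- A subrepresentation `Ū` of the reflected collection `V̄`, described in ambient terms:
`Ū_j^a = Uo j a ⊆ V_j^a` for `j ≠ i`, while `Ū_i^a = Ui a ⊆ Ker Φ_i^a = D_i^a ⊓ Ker Φ_i`. -/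
def BarSubrep (i : I) (Uo : ∀ j : I, ℤ → Submodule ℂ (Vt j))
    (Ui : ℤ → Submodule ℂ (Wt i × ((j : I) → Fin (cnat d i j) → Vt j))) : Prop :=
  (∀ a, Ui a ≤ Dg d Vt Wt Vg Wg i a ⊓ LinearMap.ker (Phi d Vt Wt x A i)) ∧
  (∀ j, j ≠ i → ∀ a, Uo j a ≤ Vg j a) ∧
  (∀ j j', j ≠ i → j' ≠ i → ∀ a, (Uo j' a).map (x j j') ≤ Uo j (a - d j' j)) ∧
  (∀ j, j ≠ i → ∀ a, (Ui a).map (prj d Vt Wt i j) ≤ Uo j (a - d i j)) ∧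
  (∀ j, j ≠ i → ∀ a,
    (Uo j (a + d i j)).map (Psi d Vt Wt x B i ∘ₗ x i j) ≤ Ui a) ∧
  (∀ a, (Ui a).map (Ups d Vt Wt x i) ≤ Ui (a - d i i))

/-- The dimension vector of a subrepresentation of the reflected collection. -/
noncomputable def dimbar (i : I) (Uo : ∀ j : I, ℤ → Submodule ℂ (Vt j))
    (Ui : ℤ → Submodule ℂ (Wt i × ((j : I) → Fin (cnat d i j) → Vt j))) : I → ℤ → ℤ :=
  fun j a => if j = i then (Module.finrank ℂ (Ui a) : ℤ)
    else (Module.finrank ℂ (Uo j a) : ℤ)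

/-- The reflected collection `V̄` (with `V̄_i^a = Ker Φ_i^a`, all other data as described) is a
point of `P_{v̄,w}`: the grading of `Ker Φ_i` is an internal direct sum, the reflected maps
respect the gradings, and the relations (R1)-(R4) hold for the reflected maps. -/
def BarPoint (i : I) : Prop :=
  FiniteDimensional ℂ (LinearMap.ker (Phi d Vt Wt x A i)) ∧
  DirectSum.IsInternal (fun a : ℤ =>
    (Dg d Vt Wt Vg Wg i a).comap (LinearMap.ker (Phi d Vt Wt x A i)).subtype) ∧
  (∀ j, j ≠ i → ∀ a,
    ((Dg d Vt Wt Vg Wg i a ⊓ LinearMap.ker (Phi d Vt Wt x A i)).map (prj d Vt Wt i j))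
      ≤ Vg j (a - d i j)) ∧
  (∀ j, j ≠ i → ∀ a,
    (Vg j (a + d i j)).map (Psi d Vt Wt x B i ∘ₗ x i j)
      ≤ Dg d Vt Wt Vg Wg i a ⊓ LinearMap.ker (Phi d Vt Wt x A i)) ∧
  (∀ a, ((Dg d Vt Wt Vg Wg i a ⊓ LinearMap.ker (Phi d Vt Wt x A i)).map (Ups d Vt Wt x i))
      ≤ Dg d Vt Wt Vg Wg i (a - d i i) ⊓ LinearMap.ker (Phi d Vt Wt x A i)) ∧
  (∀ a, ((Wg i a).map (Psi d Vt Wt x B i ∘ₗ A i))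
      ≤ Dg d Vt Wt Vg Wg i (a + dl d i) ⊓ LinearMap.ker (Phi d Vt Wt x A i)) ∧
  (∀ a, ((Dg d Vt Wt Vg Wg i a ⊓ LinearMap.ker (Phi d Vt Wt x A i)).map
      (LinearMap.fst ℂ (Wt i) ((j : I) → Fin (cnat d i j) → Vt j)))
      ≤ Wg i (a + dl d i)) ∧
  -- (R1), case of the pair (j, i) with j ≠ i
  (∀ j, j ≠ i → ∀ u ∈ LinearMap.ker (Phi d Vt Wt x A i),
    lpow (x j j) (cnat d j i) (prj d Vt Wt i j u) +
      prj d Vt Wt i j (lpow (Ups d Vt Wt x i) (cnat d i j) u) = 0) ∧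
  -- (R1), case of the pair (i, j) with j ≠ i
  (∀ j, j ≠ i →
    lpow (Ups d Vt Wt x i) (cnat d i j) ∘ₗ (Psi d Vt Wt x B i ∘ₗ x i j) +
      (Psi d Vt Wt x B i ∘ₗ x i j) ∘ₗ lpow (x j j) (cnat d j i) = 0) ∧
  -- (R1), case of a pair (j, j') not involving i
  (∀ j j', j ≠ i → j' ≠ i → j ≠ j' →
    lpow (x j j) (cnat d j j') ∘ₗ x j j' + x j j' ∘ₗ lpow (x j' j') (cnat d j' j) = 0) ∧
  -- (R2) at the vertex i
  (∀ u ∈ LinearMap.ker (Phi d Vt Wt x A i),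
    (∑ j ∈ Finset.univ.erase i, ∑ ℓ ∈ Finset.range (cnat d i j),
      lpow (Ups d Vt Wt x i) (cnat d i j - 1 - ℓ)
        ((Psi d Vt Wt x B i ∘ₗ x i j)
          (prj d Vt Wt i j (lpow (Ups d Vt Wt x i) ℓ u)))) +
      Psi d Vt Wt x B i
        (A i ((LinearMap.fst ℂ (Wt i) ((j : I) → Fin (cnat d i j) → Vt j)) u)) = 0) ∧
  -- (R2) at a vertex j ≠ i
  (∀ j, j ≠ i →
    (∑ j' ∈ Finset.univ.erase j, ∑ ℓ ∈ Finset.range (cnat d j j'),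
      (if j' = i then
        lpow (x j j) (cnat d j j' - 1 - ℓ) ∘ₗ prj d Vt Wt i j ∘ₗ
          Psi d Vt Wt x B i ∘ₗ x i j ∘ₗ lpow (x j j) ℓ
      else
        lpow (x j j) (cnat d j j' - 1 - ℓ) ∘ₗ x j j' ∘ₗ x j' j ∘ₗ lpow (x j j) ℓ)) +
      A j ∘ₗ B j = 0) ∧
  -- (R3) at the vertex i
  (Ups d Vt Wt x i ∘ₗ (Psi d Vt Wt x B i ∘ₗ A i) = 0) ∧
  -- (R3) at a vertex j ≠ i
  (∀ j, j ≠ i → x j j ∘ₗ A j = 0) ∧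
  -- (R4) at the vertex i
  (∀ u ∈ LinearMap.ker (Phi d Vt Wt x A i),
    (LinearMap.fst ℂ (Wt i) ((j : I) → Fin (cnat d i j) → Vt j)) (Ups d Vt Wt x i u) = 0) ∧
  -- (R4) at a vertex j ≠ i
  (∀ j, j ≠ i → B j ∘ₗ x j j = 0)

/-- `θ'`-stability of the reflected collection, in ambient terms. -/
def BarStable (i : I) (θ' : I → ℝ) : Prop :=
  (∀ (Uo : ∀ j : I, ℤ → Submodule ℂ (Vt j))
      (Ui : ℤ → Submodule ℂ (Wt i × ((j : I) → Fin (cnat d i j) → Vt j))),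
    BarSubrep d Vt Wt Vg Wg x A B i Uo Ui →
    (∀ j, j ≠ i → ∀ a, (Uo j a).map (B j) = ⊥) →
    (∀ a, (Ui a).map (LinearMap.fst ℂ (Wt i) ((j : I) → Fin (cnat d i j) → Vt j)) = ⊥) →
    pairθ d θ' (dimbar d Vt Wt i Uo Ui) ≤ 0) ∧
  (∀ (Uo : ∀ j : I, ℤ → Submodule ℂ (Vt j))
      (Ui : ℤ → Submodule ℂ (Wt i × ((j : I) → Fin (cnat d i j) → Vt j))),
    BarSubrep d Vt Wt Vg Wg x A B i Uo Ui →
    (∀ j, j ≠ i → ∀ a, (Wg j a).map (A j) ≤ Uo j (a + dl d j)) →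
    (∀ a, (Wg i a).map (Psi d Vt Wt x B i ∘ₗ A i) ≤ Ui (a + dl d i)) →
    0 ≤ pairθ d θ'
      (fun j a => SS d w i (fun j' b => (v j' b : ℤ)) j a - dimbar d Vt Wt i Uo Ui j a))

end Rep

end QChar
open QChar

section Aux
variable {I : Type} [Fintype I] [DecidableEq I]
    (d : I → I → ℤ)
    (Vt : I → Type) [∀ i, AddCommGroup (Vt i)] [∀ i, Module ℂ (Vt i)]
    (Wt : I → Type) [∀ i, AddCommGroup (Wt i)] [∀ i, Module ℂ (Wt i)]
    (x : ∀ j i : I, Vt i →ₗ[ℂ] Vt j) (A : ∀ i : I, Wt i →ₗ[ℂ] Vt i)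

lemma myPhi_apply (i : I) (p : Wt i × ((j : I) → Fin (cnat d i j) → Vt j)) :
    Phi d Vt Wt x A i p = A i p.1 + ∑ j : I, ∑ k : Fin (cnat d i j),
      lpow (x i i) (k : ℕ) (x i j (p.2 j k)) := by
  simp [Phi]

lemma myPhi_single (i j : I) (k₀ : Fin (cnat d i j)) (u : Vt j) :
    Phi d Vt Wt x A i (0, Pi.single j (Pi.single k₀ u)) =
      lpow (x i i) (k₀ : ℕ) (x i j u) := by
  rw [myPhi_apply]
  simp only [map_zero, zero_add]
  rw [Finset.sum_eq_single j]
  · rw [Finset.sum_eq_single k₀]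
    · simp
    · intro k _ hk
      simp [Pi.single_eq_same, Pi.single_eq_of_ne hk]
    · simp
  · intro j' _ hj'
    simp [Pi.single_eq_of_ne hj']
  · simp

end Aux
open QChar

section Aux2
variable {I : Type} [Fintype I] [DecidableEq I] {d : I → I → ℤ}

lemma my_cnat_mul (hd : CartanData d) {i j : I} (hij : i ≠ j) :
    (cnat d i j : ℤ) * d i i = -(2 * d i j) := by
  obtain ⟨c, hc⟩ := hd.dvd i j
  have hdii := hd.pos i
  have hcc : cc d i j = c := by
    rw [cc, hc, Int.mul_ediv_cancel_left _ (ne_of_gt hdii)]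
  have hcle : c ≤ 0 := by
    by_contra h
    push_neg at h
    nlinarith [hd.offdiag i j hij]
  rw [cnat, hcc, Int.toNat_of_nonneg (by omega), hc]
  ring

lemma my_cnat_diag (hd : CartanData d) (i : I) : cnat d i i = 0 := by
  have hdii := hd.pos i
  have : cc d i i = 2 := by
    rw [cc]; exact Int.mul_ediv_cancel _ (ne_of_gt hdii)
  rw [cnat, this]
  rfl

lemma my_cnat_zero (hd : CartanData d) {i j : I} (hij : i ≠ j)
    (h : cnat d i j = 0) : d i j = 0 := by
  have := my_cnat_mul hd hij
  rw [h] at this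
  have hdii := hd.pos i
  omega

lemma my_dii_eq (hd : CartanData d) (i : I) : d i i = 2 * dl d i := by
  obtain ⟨r, hr⟩ := hd.even i
  rw [dl]; omega

lemma my_dl_pos (hd : CartanData d) (i : I) : 0 < dl d i := by
  have := hd.pos i
  have := my_dii_eq hd i
  omega

lemma my_cnat_symm (hd : CartanData d) {i j : I} (hij : i ≠ j) :
    (cnat d i j : ℤ) * d i i = (cnat d j i : ℤ) * d j j := by
  rw [my_cnat_mul hd hij, my_cnat_mul hd hij.symm, hd.symm i j]

end Aux2
open QChar

section Aux3
variable {I : Type} [Fintype I] [DecidableEq I]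
    (d : I → I → ℤ)
    (Vt : I → Type) [∀ i, AddCommGroup (Vt i)] [∀ i, Module ℂ (Vt i)]
    (Wt : I → Type) [∀ i, AddCommGroup (Wt i)] [∀ i, Module ℂ (Wt i)]
    (Vg : ∀ i : I, ℤ → Submodule ℂ (Vt i)) (Wg : ∀ i : I, ℤ → Submodule ℂ (Wt i))
    (x : ∀ j i : I, Vt i →ₗ[ℂ] Vt j) (A : ∀ i : I, Wt i →ₗ[ℂ] Vt i)

lemma my_lpow_mem (hx : ∀ j i a, (Vg i a).map (x j i) ≤ Vg j (a - d i j))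
    (i : I) (k : ℕ) (a : ℤ) {u : Vt i} (hu : u ∈ Vg i a) :
    lpow (x i i) k u ∈ Vg i (a - (k : ℤ) * d i i) := by
  induction k with
  | zero => simpa [lpow] using hu
  | succ n ih =>
    have h := hx i i (a - (n : ℤ) * d i i) (Submodule.mem_map_of_mem ih)
    have e : lpow (x i i) (n + 1) u = x i i (lpow (x i i) n u) := rfl
    rw [e]; push_cast
    rw [show a - ((n : ℤ) + 1) * d i i = a - (n : ℤ) * d i i - d i i by ring]
    exact h

lemma my_mem_Dg_single (i : I) (b : ℤ) (j : I) (k₀ : Fin (cnat d i j)) (u : Vt j)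
    (hu : u ∈ Vg j (b + d i j + (((k₀ : ℕ) : ℤ) + 1) * d i i)) :
    ((0, Pi.single j (Pi.single k₀ u)) :
      Wt i × ((j' : I) → Fin (cnat d i j') → Vt j')) ∈ Dg d Vt Wt Vg Wg i b := by
  refine Submodule.mem_prod.mpr ⟨Submodule.zero_mem _, ?_⟩
  refine Submodule.mem_pi.mpr fun j' _ => Submodule.mem_pi.mpr fun k _ => ?_
  dsimp only
  rcases eq_or_ne j' j with rfl | hj'
  · rw [Pi.single_eq_same]
    rcases eq_or_ne k k₀ with rfl | hk
    · rw [Pi.single_eq_same]; exact hu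
    · simp [Pi.single_eq_of_ne hk]
  · simp [Pi.single_eq_of_ne hj']

lemma my_Phi_grade (hd : CartanData d)
    (hx : ∀ j i a, (Vg i a).map (x j i) ≤ Vg j (a - d i j))
    (hA : ∀ i a, (Wg i a).map (A i) ≤ Vg i (a + dl d i))
    (i : I) (b : ℤ) {p : Wt i × ((j : I) → Fin (cnat d i j) → Vt j)}
    (hp : p ∈ Dg d Vt Wt Vg Wg i b) :
    Phi d Vt Wt x A i p ∈ Vg i (b + d i i) := by
  obtain ⟨hp1, hp2⟩ := Submodule.mem_prod.mp hp
  rw [myPhi_apply]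
  refine Submodule.add_mem _ ?_
    (Submodule.sum_mem _ fun j _ => Submodule.sum_mem _ fun k _ => ?_)
  · have h := hA i (b + dl d i) (Submodule.mem_map_of_mem hp1)
    rw [show b + dl d i + dl d i = b + d i i by have := my_dii_eq hd i; omega] at h
    exact h
  · have hjk : p.2 j k ∈ Vg j (b + d i j + (((k : ℕ) : ℤ) + 1) * d i i) :=
      Submodule.mem_pi.mp (Submodule.mem_pi.mp hp2 j (Set.mem_univ j)) k (Set.mem_univ k)
    have h1 := hx i j _ (Submodule.mem_map_of_mem hjk)
    have h2 := my_lpow_mem d Vt Vg x hx i (k : ℕ) _ h1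
    rw [show b + d i j + (((k : ℕ) : ℤ) + 1) * d i i - d j i - ((k : ℕ) : ℤ) * d i i
        = b + d i i by rw [hd.symm i j]; ring] at h2
    exact h2

lemma my_x_zero (hd : CartanData d)
    (hR1 : ∀ i j, i ≠ j →
      lpow (x j j) (cnat d j i) ∘ₗ x j i + x j i ∘ₗ lpow (x i i) (cnat d i j) = 0)
    {i j : I} (hij : j ≠ i) (h : cnat d i j = 0) : x i j = 0 := by
  have hdij : d i j = 0 := my_cnat_zero hd hij.symm h
  have hji : cnat d j i = 0 := by
    have h1 := my_cnat_mul hd hij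
    rw [hd.symm j i, hdij] at h1
    have := hd.pos j
    have : (cnat d j i : ℤ) = 0 := by
      rcases Nat.eq_zero_or_pos (cnat d j i) with h0 | h0
      · exact_mod_cast h0
      · nlinarith [h1]
    exact_mod_cast this
  ext u
  have h2 := DFunLike.congr_fun (hR1 j i hij) u
  simp only [hji, h, lpow, LinearMap.add_apply, LinearMap.comp_apply, LinearMap.id_coe,
    id_eq, LinearMap.zero_apply] at h2
  have h3 : (2 : ℂ) • x i j u = 0 := by rw [two_smul]; exact h2
  simpa using (smul_eq_zero.mp h3).resolve_left (by norm_num)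

end Aux3
open QChar in
/-- if `θ_i < 0`, then for every `θ`-stable point of `P_{v,w}` and every
`a ∈ ℤ`, the map `Φ_i^a : D_i^a → V_i^{a+d_{ii}}` is surjective. -/
theorem extremal_qchar_stmt0 {I : Type} [Fintype I] [DecidableEq I]
    (d : I → I → ℤ) (v w : I → ℤ → ℕ)
    (Vt : I → Type) [∀ i, AddCommGroup (Vt i)] [∀ i, Module ℂ (Vt i)]
    (Wt : I → Type) [∀ i, AddCommGroup (Wt i)] [∀ i, Module ℂ (Wt i)]
    (Vg : ∀ i : I, ℤ → Submodule ℂ (Vt i)) (Wg : ∀ i : I, ℤ → Submodule ℂ (Wt i))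
    (x : ∀ j i : I, Vt i →ₗ[ℂ] Vt j) (A : ∀ i : I, Wt i →ₗ[ℂ] Vt i)
    (B : ∀ i : I, Vt i →ₗ[ℂ] Wt i)
    (hd : QChar.CartanData d)
    (hv : (Function.support fun p : I × ℤ => v p.1 p.2).Finite)
    (hw : (Function.support fun p : I × ℤ => w p.1 p.2).Finite)
    (hrep : QChar.IsRep d v w Vt Wt Vg Wg x A B)
    (i : I) (θ : I → ℝ) (hθi : θ i < 0)
    (hstab : QChar.IsStable d v Vt Wt Vg Wg x A B θ) :
    ∀ a : ℤ, Vg i (a + d i i) ≤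
      (QChar.Dg d Vt Wt Vg Wg i a).map (QChar.Phi d Vt Wt x A i) := by
  classical
  obtain ⟨hVfin, hWfin, hVint, hWint, hVdim, hWdim, hx, hA, hB, hR1, hR2, hR3, hR4⟩ := hrep
  -- the image of Φ, graded
  set T : ℤ → Submodule ℂ (Vt i) :=
    fun a => (QChar.Dg d Vt Wt Vg Wg i (a - d i i)).map (QChar.Phi d Vt Wt x A i) with hT
  have hTle : ∀ a, T a ≤ Vg i a := by
    intro a u hu
    simp only [hT, Submodule.mem_map] at hu
    obtain ⟨p, hp, rfl⟩ := hu
    have h := my_Phi_grade d Vt Wt Vg Wg x A hd hx hA i (a - d i i) hp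
    rwa [show a - d i i + d i i = a by ring] at h
  -- membership helper
  have hmemT : ∀ (a c : ℤ) (j : I) (k₀ : Fin (QChar.cnat d i j)) (u : Vt j),
      u ∈ Vg j c → c = a - d i i + d i j + (((k₀ : ℕ) : ℤ) + 1) * d i i →
      QChar.lpow (x i i) (k₀ : ℕ) (x i j u) ∈ T a := by
    intro a c j k₀ u hu hc
    subst hc
    simp only [hT]
    rw [← myPhi_single d Vt Wt x A i j k₀ u]
    exact Submodule.mem_map_of_mem (my_mem_Dg_single d Vt Wt Vg Wg i (a - d i i) j k₀ u hu)
  -- the candidate subrepresentation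
  set U : ∀ j : I, ℤ → Submodule ℂ (Vt j) :=
    Function.update (fun (j : I) (a : ℤ) => Vg j a) i T with hU
  have hUi : ∀ a, U i a = T a := by
    intro a; rw [hU, Function.update_self]
  have hUo : ∀ j, j ≠ i → ∀ a, U j a = Vg j a := by
    intro j hj a; rw [hU, Function.update_of_ne hj]
  -- x i i maps T a into T (a - d i i): the heart of the matter
  have hxiiT : ∀ a, (T a).map (x i i) ≤ T (a - d i i) := by
    intro a
    rintro _ ⟨u, hu, rfl⟩
    simp only [hT, Submodule.mem_map] at hu
    obtain ⟨p, hp, rfl⟩ := hu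
    obtain ⟨hp1, hp2⟩ := Submodule.mem_prod.mp hp
    rw [myPhi_apply]
    have h0 : x i i (A i p.1) = 0 := by
      have h := DFunLike.congr_fun (hR3 i) p.1
      simpa using h
    simp only [map_add, map_sum, h0, zero_add]
    refine Submodule.sum_mem _ fun j _ => Submodule.sum_mem _ fun k _ => ?_
    rcases eq_or_ne j i with hj | hj
    · have hz : QChar.cnat d i j = 0 := by rw [hj]; exact my_cnat_diag hd i
      exact absurd k.isLt (by omega)
    have hpjk : p.2 j k ∈ Vg j (a - d i i + d i j + (((k : ℕ) : ℤ) + 1) * d i i) :=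
      Submodule.mem_pi.mp (Submodule.mem_pi.mp hp2 j (Set.mem_univ j)) k (Set.mem_univ k)
    have hk : (k : ℕ) + 1 ≤ QChar.cnat d i j := k.isLt
    rcases lt_or_eq_of_le hk with hlt | heq
    · -- middle components
      have h := hmemT (a - d i i) _ j ⟨(k : ℕ) + 1, hlt⟩ (p.2 j k) hpjk
        (by simp only [Fin.val_mk]; push_cast; ring)
      simpa [QChar.lpow] using h
    · -- top component: use relation (R1)
      have hcomp := DFunLike.congr_fun (hR1 j i hj) (p.2 j k)
      simp only [LinearMap.add_apply, LinearMap.comp_apply, LinearMap.zero_apply] at hcomp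
      have hterm : x i i (QChar.lpow (x i i) (k : ℕ) (x i j (p.2 j k))) =
          -(x i j (QChar.lpow (x j j) (QChar.cnat d j i) (p.2 j k))) := by
        have e : x i i (QChar.lpow (x i i) (k : ℕ) (x i j (p.2 j k))) =
            QChar.lpow (x i i) ((k : ℕ) + 1) (x i j (p.2 j k)) := rfl
        rw [e, heq]
        exact eq_neg_of_add_eq_zero_left hcomp
      rw [hterm]
      refine Submodule.neg_mem _ ?_
      have hu' := my_lpow_mem d Vt Vg x hx j (QChar.cnat d j i) _ hpjk
      have hpos : 0 < QChar.cnat d i j := by omega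
      have hk1 : ((k : ℕ) : ℤ) + 1 = (QChar.cnat d i j : ℤ) := by exact_mod_cast heq
      have h := hmemT (a - d i i) _ j ⟨0, hpos⟩ _ hu'
        (by
          simp only [Fin.val_mk]
          push_cast
          rw [hk1, my_cnat_symm hd hj.symm]
          ring)
      simpa [QChar.lpow] using h
  -- U is a subrepresentation
  have hsub : QChar.IsSubrep d Vt Vg x U := by
    constructor
    · intro j a
      rcases eq_or_ne j i with hj | hj
      · rw [hj, hUi]
        exact hTle a
      · rw [hUo j hj]
    · intro j j' a
      rcases eq_or_ne j' i with hj' | hj'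
      · rcases eq_or_ne j i with hj | hj
        · -- the hard case: x i i maps T a into T (a - d i i)
          rw [hj, hj', hUi, hUi]
          exact hxiiT a
        · -- source i, target j ≠ i
          rw [hj', hUi, hUo j hj]
          rintro _ ⟨u, hu, rfl⟩
          exact hx j i a (Submodule.mem_map_of_mem (hTle a hu))
      · rcases eq_or_ne j i with hj | hj
        · -- source j' ≠ i, target i
          rw [hj, hUo j' hj', hUi]
          rintro _ ⟨u, hu, rfl⟩
          by_cases hc : QChar.cnat d i j' = 0
          · rw [my_x_zero d Vt x hd hR1 hj' hc]
            simp only [LinearMap.zero_apply]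
            exact Submodule.zero_mem _
          · have hpos : 0 < QChar.cnat d i j' := Nat.pos_of_ne_zero hc
            have h := hmemT (a - d j' i) a j' ⟨0, hpos⟩ u hu
              (by
                simp only [Fin.val_mk]
                push_cast
                rw [hd.symm i j']
                ring)
            simpa [QChar.lpow] using h
        · -- both away from i
          rw [hUo j' hj', hUo j hj]
          rintro _ ⟨u, hu, rfl⟩
          exact hx j j' a (Submodule.mem_map_of_mem hu)
  -- U contains the image of A
  have hImA : ∀ j a, (Wg j a).map (A j) ≤ U j (a + QChar.dl d j) := by
    intro j a
    rcases eq_or_ne j i with hj | hj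
    · subst hj
      rw [hUi]
      rintro _ ⟨w0, hw0, rfl⟩
      have hApply : QChar.Phi d Vt Wt x A j (w0, 0) = A j w0 := by
        rw [myPhi_apply]; simp
      simp only [hT]
      rw [← hApply]
      refine Submodule.mem_map_of_mem (Submodule.mem_prod.mpr ⟨?_, Submodule.zero_mem _⟩)
      rw [show a + QChar.dl d j - d j j + QChar.dl d j = a by have := my_dii_eq hd j; omega]
      exact hw0
    · rw [hUo j hj]; exact hA j a
  -- apply stability
  have h2 := hstab.2 U hsub hImA
  haveI : ∀ j, FiniteDimensional ℂ (Vt j) := hVfin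
  have hdimU : ∀ a, QChar.dimv Vt U i a = (Module.finrank ℂ (T a) : ℤ) := by
    intro a
    simp only [QChar.dimv]
    exact congrArg (fun p : Submodule ℂ (Vt i) => ((Module.finrank ℂ p : ℕ) : ℤ)) (hUi a)
  have hgo : ∀ j, j ≠ i → ∀ a : ℤ, ((v j a : ℤ) - QChar.dimv Vt U j a) = 0 := by
    intro j hj a
    simp only [QChar.dimv]
    have e : Module.finrank ℂ (U j a) = v j a := by
      have h := congrArg (fun p : Submodule ℂ (Vt j) => Module.finrank ℂ p) (hUo j hj a)
      exact h.trans (hVdim j a)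
    rw [e, sub_self]
  set F : ℤ → ℝ := fun a => (((v i a : ℤ) - QChar.dimv Vt U i a : ℤ) : ℝ) with hF
  have hfr : ∀ a, Module.finrank ℂ (T a) ≤ v i a := by
    intro a
    rw [← hVdim i a]
    exact Submodule.finrank_mono (hTle a)
  have hF0 : ∀ a, 0 ≤ F a := by
    intro a
    simp only [hF, hdimU a]
    have h : (Module.finrank ℂ (T a) : ℝ) ≤ (v i a : ℝ) := by exact_mod_cast hfr a
    push_cast
    linarith
  -- the pairing reduces to the i-th term
  have hpair : QChar.pairθ d θ (fun j a => (v j a : ℤ) - QChar.dimv Vt U j a)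
      = (QChar.dl d i : ℝ) * θ i * ∑ᶠ a : ℤ, F a := by
    unfold QChar.pairθ
    rw [Finset.sum_eq_single i]
    · intro j _ hj
      have hzero : (fun a : ℤ => (((v j a : ℤ) - QChar.dimv Vt U j a : ℤ) : ℝ))
          = fun _ => (0 : ℝ) := by
        funext a; rw [hgo j hj a]; norm_num
      rw [hzero, finsum_zero, mul_zero]
    · intro h; exact absurd (Finset.mem_univ i) h
  rw [hpair] at h2
  -- support of F is finite
  have hFsupp : (Function.support F).Finite := by
    have hpre : ((fun a : ℤ => ((i, a) : I × ℤ)) ⁻¹'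
        (Function.support fun p : I × ℤ => v p.1 p.2)).Finite :=
      hv.preimage (fun a _ b _ h => congrArg Prod.snd h)
    refine Set.Finite.subset hpre ?_
    intro a ha
    rw [Set.mem_preimage, Function.mem_support]
    rw [Function.mem_support] at ha
    intro hva
    apply ha
    have h0 : Module.finrank ℂ (T a) = 0 := by
      have := hfr a
      simp only at hva
      omega
    simp only [hF, hdimU a, h0]
    simp only at hva
    rw [hva]
    norm_num
  -- conclude each F a = 0
  have hSle : ∑ᶠ a : ℤ, F a ≤ 0 := by
    by_contra h
    push_neg at h
    have hdl : (0 : ℝ) < (QChar.dl d i : ℝ) := by exact_mod_cast my_dl_pos hd i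
    have : (QChar.dl d i : ℝ) * θ i * ∑ᶠ a : ℤ, F a < 0 :=
      mul_neg_of_neg_of_pos (mul_neg_of_pos_of_neg hdl hθi) h
    linarith
  have hS0 : ∑ᶠ a : ℤ, F a = 0 := le_antisymm hSle (finsum_nonneg hF0)
  have hFa : ∀ a, F a = 0 := by
    intro a
    have h1 := single_le_finsum a hFsupp hF0
    have := hF0 a
    rw [hS0] at h1
    linarith
  -- each graded piece of T is all of Vg i
  intro a
  have hfreq : Module.finrank ℂ (T (a + d i i)) = Module.finrank ℂ (Vg i (a + d i i)) := by
    have h1 := hFa (a + d i i)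
    simp only [hF, hdimU (a + d i i)] at h1
    rw [hVdim i (a + d i i)]
    push_cast at h1
    have : ((Module.finrank ℂ (T (a + d i i)) : ℝ)) = ((v i (a + d i i) : ℕ) : ℝ) := by
      linarith
    exact_mod_cast this
  have heq : T (a + d i i) = Vg i (a + d i i) :=
    Submodule.eq_of_le_of_finrank_eq (hTle _) hfreq
  rw [← heq]
  simp only [hT]
  rw [show a + d i i - d i i = a by ring]
end

section
/- For every point of P_{v,w} and every i ∈ I, the collection U defined by U_i^b := Im Φ_i^{b−d_{ii}} ⊆ V_i^b for all b ∈ ℤ, and U_j^b := V_j^b for all j ≠ i and b ∈ ℤ, is a subrepresentation which contains Im A. -/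
/- Common setup: (graded, generalized) quiver varieties attached to a symmetrized
Cartan matrix, following Neguț, "Extremal monomials of q-characters". -/

open Module LinearMap Finset

namespace QChar

variable {I : Type} [Fintype I] [DecidableEq I]

section Helpers
set_option linter.unusedSectionVars false
variable {I : Type} [Fintype I] [DecidableEq I]
variable (d : I → I → ℤ)
    (Vt : I → Type) [∀ i, AddCommGroup (Vt i)] [∀ i, Module ℂ (Vt i)]
    (Wt : I → Type) [∀ i, AddCommGroup (Wt i)] [∀ i, Module ℂ (Wt i)]
    (Vg : ∀ i : I, ℤ → Submodule ℂ (Vt i)) (Wg : ∀ i : I, ℤ → Submodule ℂ (Wt i))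
    (x : ∀ j i : I, Vt i →ₗ[ℂ] Vt j) (A : ∀ i : I, Wt i →ₗ[ℂ] Vt i)

lemma Phi_apply' (i : I) (p : Wt i × ((j : I) → Fin (cnat d i j) → Vt j)) :
    Phi d Vt Wt x A i p = A i p.1 + ∑ j : I, ∑ k : Fin (cnat d i j),
      lpow (x i i) (k : ℕ) (x i j (p.2 j k)) := by
  simp [Phi, LinearMap.sum_apply]

lemma Phi_single' (i j : I) (k : Fin (cnat d i j)) (u : Vt j) :
    Phi d Vt Wt x A i (0, Pi.single j (Pi.single k u)) =
      lpow (x i i) (k : ℕ) (x i j u) := by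
  rw [Phi_apply']
  rw [Finset.sum_eq_single j]
  · rw [Finset.sum_eq_single k]
    · simp
    · intro k' _ hk'
      simp [Pi.single_eq_same, Pi.single_eq_of_ne hk']
    · simp
  · intro j' _ hj'
    simp [Pi.single_eq_of_ne hj']
  · simp

lemma mem_Dg_iff' (i : I) (a : ℤ) (p : Wt i × ((j : I) → Fin (cnat d i j) → Vt j)) :
    p ∈ Dg d Vt Wt Vg Wg i a ↔ p.1 ∈ Wg i (a + dl d i) ∧
      ∀ (j : I) (k : Fin (cnat d i j)), p.2 j k ∈ Vg j (a + d i j + ((k : ℤ) + 1) * d i i) := by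
  simp [Dg, Submodule.mem_prod, Submodule.mem_pi]

lemma single_mem_Dg' (i j : I) (a : ℤ) (k : Fin (cnat d i j)) (u : Vt j)
    (hu : u ∈ Vg j (a + d i j + ((k : ℤ) + 1) * d i i)) :
    ((0 : Wt i), Pi.single j (Pi.single k u)) ∈ Dg d Vt Wt Vg Wg i a := by
  rw [mem_Dg_iff']
  refine ⟨zero_mem _, fun j' k' => ?_⟩
  dsimp only
  rcases eq_or_ne j' j with rfl | hj
  · rw [Pi.single_eq_same]
    rcases eq_or_ne k' k with rfl | hk
    · rwa [Pi.single_eq_same]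
    · rw [Pi.single_eq_of_ne hk]; exact zero_mem _
  · rw [Pi.single_eq_of_ne hj]; exact zero_mem _

lemma dl_add_dl (hd : CartanData d) (i : I) : dl d i + dl d i = d i i := by
  obtain ⟨r, hr⟩ := hd.even i
  unfold dl
  omega

lemma cnat_cast_mul (hd : CartanData d) {i j : I} (hij : i ≠ j) :
    (cnat d i j : ℤ) * d i i = -(2 * d i j) := by
  obtain ⟨c, hc⟩ := hd.dvd i j
  have hii := hd.pos i
  have hoff := hd.offdiag i j hij
  have hcc : cc d i j = c := by
    unfold cc; rw [hc]; exact Int.mul_ediv_cancel_left _ (ne_of_gt hii)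
  have hcle : c ≤ 0 := by nlinarith
  unfold cnat
  rw [hcc, Int.toNat_of_nonneg (by omega), hc]
  ring

lemma cnat_diag (hd : CartanData d) (i : I) : cnat d i i = 0 := by
  unfold cnat cc
  rw [Int.mul_ediv_cancel _ (ne_of_gt (hd.pos i))]
  rfl

lemma dij_eq_zero (hd : CartanData d) {i j : I} (hij : i ≠ j) (h : cnat d i j = 0) :
    d i j = 0 := by
  have h2 := cnat_cast_mul d hd hij
  rw [h] at h2
  simp at h2
  omega

lemma x_eq_zero (hd : CartanData d) {i j : I} (hij : i ≠ j)
    (hR1 : lpow (x i i) (cnat d i j) ∘ₗ x i j + x i j ∘ₗ lpow (x j j) (cnat d j i) = 0)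
    (h : cnat d i j = 0) : x i j = 0 := by
  have h1 : d i j = 0 := dij_eq_zero d hd hij h
  have h2 : cnat d j i = 0 := by
    unfold cnat cc
    rw [hd.symm j i, h1]
    simp
  rw [h, h2] at hR1
  ext u
  have h3 := LinearMap.congr_fun hR1 u
  simp [lpow] at h3 ⊢
  have h4 : (2 : ℂ) • x i j u = 0 := by rw [two_smul]; exact h3
  rcases smul_eq_zero.mp h4 with h5 | h5
  · exact absurd h5 two_ne_zero
  · exact h5

lemma lpow_eq_succ {M : Type} [AddCommGroup M] [Module ℂ M] (f : M →ₗ[ℂ] M)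
    {m n : ℕ} (h : m = n + 1) (u : M) : lpow f m u = f (lpow f n u) := by
  subst h; rfl

lemma lpow_mem (i : I) (hx : ∀ a, (Vg i a).map (x i i) ≤ Vg i (a - d i i)) (k : ℕ) :
    ∀ (c : ℤ) (u : Vt i), u ∈ Vg i c → lpow (x i i) k u ∈ Vg i (c - (k : ℤ) * d i i) := by
  induction k with
  | zero => intro c u hu; simpa [lpow] using hu
  | succ n ih =>
    intro c u hu
    have h1 : lpow (x i i) (n + 1) u = x i i (lpow (x i i) n u) := rfl
    have heq : c - ((n + 1 : ℕ) : ℤ) * d i i = (c - (n : ℤ) * d i i) - d i i := by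
      push_cast; ring
    rw [h1, heq]
    exact hx _ ⟨_, ih c u hu, rfl⟩

lemma Phi_map_Dg (hd : CartanData d)
    (hx : ∀ j i a, (Vg i a).map (x j i) ≤ Vg j (a - d i j))
    (hA : ∀ i a, (Wg i a).map (A i) ≤ Vg i (a + dl d i)) (i : I) (a : ℤ) :
    (Dg d Vt Wt Vg Wg i a).map (Phi d Vt Wt x A i) ≤ Vg i (a + d i i) := by
  rintro _ ⟨p, hp, rfl⟩
  rw [SetLike.mem_coe, mem_Dg_iff'] at hp
  rw [Phi_apply']
  apply add_mem
  · have h1 := hA i (a + dl d i) ⟨p.1, hp.1, rfl⟩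
    have heq : a + dl d i + dl d i = a + d i i := by
      have := dl_add_dl d hd i; linarith
    rwa [heq] at h1
  · refine Submodule.sum_mem _ fun j _ => Submodule.sum_mem _ fun k _ => ?_
    have h1 : x i j (p.2 j k) ∈ Vg i (a + d i j + ((k : ℤ) + 1) * d i i - d j i) :=
      hx i j _ ⟨_, hp.2 j k, rfl⟩
    have h2 := lpow_mem d Vt Vg x i (fun b => hx i i b) (k : ℕ) _ _ h1
    have heq : a + d i j + ((k : ℤ) + 1) * d i i - d j i - ((k : ℕ) : ℤ) * d i i
        = a + d i i := by
      rw [hd.symm i j]; ring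
    rwa [heq] at h2

end Helpers
end QChar
open QChar in
/-- for every point of `P_{v,w}` and every `i ∈ I`, the collection with
`U_i^b = Im Φ_i^{b - d_{ii}}` and `U_j^b = V_j^b` for `j ≠ i` is a subrepresentation
containing `Im A`. -/
theorem extremal_qchar_stmt1 {I : Type} [Fintype I] [DecidableEq I]
    (d : I → I → ℤ) (v w : I → ℤ → ℕ)
    (Vt : I → Type) [∀ i, AddCommGroup (Vt i)] [∀ i, Module ℂ (Vt i)]
    (Wt : I → Type) [∀ i, AddCommGroup (Wt i)] [∀ i, Module ℂ (Wt i)]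
    (Vg : ∀ i : I, ℤ → Submodule ℂ (Vt i)) (Wg : ∀ i : I, ℤ → Submodule ℂ (Wt i))
    (x : ∀ j i : I, Vt i →ₗ[ℂ] Vt j) (A : ∀ i : I, Wt i →ₗ[ℂ] Vt i)
    (B : ∀ i : I, Vt i →ₗ[ℂ] Wt i)
    (hd : QChar.CartanData d)
    (hv : (Function.support fun p : I × ℤ => v p.1 p.2).Finite)
    (hw : (Function.support fun p : I × ℤ => w p.1 p.2).Finite)
    (hrep : QChar.IsRep d v w Vt Wt Vg Wg x A B)
    (i : I) (U : ∀ j : I, ℤ → Submodule ℂ (Vt j))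
    (hUi : ∀ b : ℤ, U i b =
      (QChar.Dg d Vt Wt Vg Wg i (b - d i i)).map (QChar.Phi d Vt Wt x A i))
    (hUj : ∀ j : I, j ≠ i → ∀ b : ℤ, U j b = Vg j b) :
    QChar.IsSubrep d Vt Vg x U ∧
      (∀ j a, (Wg j a).map (A j) ≤ U j (a + QChar.dl d j)) := by
  obtain ⟨hfV, hfW, hiV, hiW, hdV, hdW, hx, hA, hB, hR1, hR2, hR3, hR4⟩ := hrep
  have hUle : ∀ j a, U j a ≤ Vg j a := by
    intro j a
    rcases eq_or_ne j i with rfl | hj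
    · rw [hUi a]
      have h1 := Phi_map_Dg d Vt Wt Vg Wg x A hd hx hA j (a - d j j)
      have heq : a - d j j + d j j = a := by ring
      rwa [heq] at h1
    · rw [hUj j hj a]
  refine ⟨⟨hUle, ?_⟩, ?_⟩
  · -- x preserves U
    intro j' i' a
    rcases eq_or_ne i i' with rfl | hi'
    · rcases eq_or_ne i j' with rfl | hj'
      · -- the loop map at i
        rintro _ ⟨u, hu, rfl⟩
        rw [hUi a] at hu
        rw [SetLike.mem_coe] at hu
        obtain ⟨p, hp, rfl⟩ := hu
        rw [SetLike.mem_coe, mem_Dg_iff'] at hp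
        rw [hUi (a - d i i)]
        refine Submodule.mem_map.mpr ⟨(0, fun j (k : Fin (cnat d i j)) =>
          if h : (k : ℕ) = 0 then
            -(lpow (x j j) (cnat d j i)
              (p.2 j ⟨cnat d i j - 1, Nat.sub_lt k.pos Nat.one_pos⟩))
          else p.2 j ⟨(k : ℕ) - 1, lt_of_le_of_lt (Nat.sub_le _ _) k.isLt⟩), ?_, ?_⟩
        · rw [mem_Dg_iff']
          refine ⟨zero_mem _, fun j k => ?_⟩
          have hji : j ≠ i := by
            intro h; rw [h, cnat_diag d hd i] at k; exact absurd k.pos (by simp)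
          dsimp only
          split_ifs with h0
          · apply neg_mem
            have hm := hp.2 j ⟨cnat d i j - 1, Nat.sub_lt k.pos Nat.one_pos⟩
            have hcpos := k.pos
            have hcast : ((⟨cnat d i j - 1, Nat.sub_lt k.pos Nat.one_pos⟩ :
                Fin (cnat d i j)) : ℤ) = (cnat d i j : ℤ) - 1 := by
              simp; omega
            rw [hcast] at hm
            have h2 := lpow_mem d Vt Vg x j (fun b => hx j j b) (cnat d j i) _ _ hm
            have heq : a - d i i + d i j + ((cnat d i j : ℤ) - 1 + 1) * d i i -
                (cnat d j i : ℤ) * d j j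
                = a - d i i - d i i + d i j + ((k : ℤ) + 1) * d i i := by
              have e1 := cnat_cast_mul d hd (Ne.symm hji)
              have e2 := cnat_cast_mul d hd hji
              have e3 := hd.symm i j
              have e4 : ((k : ℕ) : ℤ) = 0 := by exact_mod_cast h0
              rw [e4]
              linear_combination e1 - e2 - 2 * e3
            rwa [heq] at h2
          · have hm := hp.2 j ⟨(k : ℕ) - 1, lt_of_le_of_lt (Nat.sub_le _ _) k.isLt⟩
            have hk1 : 1 ≤ (k : ℕ) := Nat.one_le_iff_ne_zero.mpr h0
            have hcast : ((⟨(k : ℕ) - 1, lt_of_le_of_lt (Nat.sub_le _ _) k.isLt⟩ :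
                Fin (cnat d i j)) : ℤ) = (k : ℤ) - 1 := by
              simp; omega
            rw [hcast] at hm
            have heq : a - d i i + d i j + ((k : ℤ) - 1 + 1) * d i i
                = a - d i i - d i i + d i j + ((k : ℤ) + 1) * d i i := by ring
            rwa [heq] at hm
        · -- Phi q = x i i (Phi p)
          rw [Phi_apply', Phi_apply']
          rw [map_add]
          have h0 : x i i (A i p.1) = 0 := by
            have := LinearMap.congr_fun (hR3 i) p.1
            simpa using this
          rw [h0, zero_add, map_sum, map_zero, zero_add]
          dsimp only
          refine Finset.sum_congr rfl fun j _ => ?_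
          rw [map_sum]
          refine Finset.sum_nbij' (fun k : Fin (cnat d i j) =>
              if h : (k : ℕ) = 0 then
                (⟨cnat d i j - 1, Nat.sub_lt k.pos Nat.one_pos⟩ : Fin (cnat d i j))
              else ⟨(k : ℕ) - 1, lt_of_le_of_lt (Nat.sub_le _ _) k.isLt⟩)
            (fun k : Fin (cnat d i j) =>
              if h : (k : ℕ) + 1 = cnat d i j then ⟨0, k.pos⟩
              else ⟨(k : ℕ) + 1, lt_of_le_of_ne k.isLt h⟩)
            (fun k _ => Finset.mem_univ _) (fun k _ => Finset.mem_univ _)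
            ?_ ?_ ?_
          · intro k _
            have hlt := k.isLt
            have hpos := k.pos
            ext
            rcases Nat.eq_zero_or_pos (k : ℕ) with h1 | h1
            · rw [dif_pos h1]
              rw [dif_pos (by omega : cnat d i j - 1 + 1 = cnat d i j)]
              simp [h1]
            · rw [dif_neg (by omega : ¬ (k : ℕ) = 0)]
              rw [dif_neg (by omega : ¬ (k : ℕ) - 1 + 1 = cnat d i j)]
              simp
              omega
          · intro k _
            have hlt := k.isLt
            have hpos := k.pos
            ext
            rcases Nat.eq_or_lt_of_le (Nat.succ_le_of_lt hlt) with h1 | h1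
            · rw [dif_pos h1]
              rw [dif_pos rfl]
              simp
              omega
            · rw [dif_neg (by omega : ¬ (k : ℕ) + 1 = cnat d i j)]
              rw [dif_neg (by omega : ¬ (k : ℕ) + 1 = 0)]
              simp
          · intro k _
            have hji : j ≠ i := by
              intro h; rw [h, cnat_diag d hd i] at k; exact absurd k.pos (by simp)
            split_ifs with h1
            · have hR := hR1 j i hji
              have hRy := LinearMap.congr_fun hR
                (p.2 j ⟨cnat d i j - 1, Nat.sub_lt k.pos Nat.one_pos⟩)
              simp only [LinearMap.add_apply, LinearMap.comp_apply,
                LinearMap.zero_apply] at hRy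
              rw [h1]
              have e5 : ((⟨cnat d i j - 1, Nat.sub_lt k.pos Nat.one_pos⟩ :
                  Fin (cnat d i j)) : ℕ) = cnat d i j - 1 := rfl
              rw [e5]
              rw [← lpow_eq_succ (x i i)
                (show cnat d i j = (cnat d i j - 1) + 1 by have := k.pos; omega)]
              simp only [lpow, LinearMap.id_coe, id_eq, map_neg]
              rw [eq_neg_of_add_eq_zero_right hRy, neg_neg]
            · have hk1 : 1 ≤ (k : ℕ) := Nat.one_le_iff_ne_zero.mpr h1
              have e5 : ((⟨(k : ℕ) - 1, lt_of_le_of_lt (Nat.sub_le _ _) k.isLt⟩ :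
                  Fin (cnat d i j)) : ℕ) = (k : ℕ) - 1 := rfl
              rw [e5]
              exact lpow_eq_succ (x i i) (by omega) _
      · -- source i, target j' ≠ i
        rw [hUj j' (Ne.symm hj') (a - d i j')]
        rintro _ ⟨u, hu, rfl⟩
        rw [SetLike.mem_coe] at hu
        have hu' : u ∈ Vg i a := hUle i a hu
        exact hx j' i a ⟨u, hu', rfl⟩
    · rcases eq_or_ne i j' with rfl | hj'
      · -- target i, source i' ≠ i
        rintro _ ⟨u, hu, rfl⟩
        rw [SetLike.mem_coe, hUj i' (Ne.symm hi') a] at hu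
        rw [hUi (a - d i' i)]
        by_cases hc : cnat d i i' = 0
        · have hx0 : x i i' = 0 :=
            x_eq_zero d Vt x hd hi' (hR1 i' i (Ne.symm hi')) hc
          rw [hx0]
          simpa using zero_mem _
        · refine Submodule.mem_map.mpr
            ⟨(0, Pi.single i' (Pi.single (⟨0, Nat.pos_of_ne_zero hc⟩ : Fin (cnat d i i')) u)),
              ?_, ?_⟩
          · apply single_mem_Dg'
            have heq : a - d i' i - d i i + d i i' +
                (((⟨0, Nat.pos_of_ne_zero hc⟩ : Fin (cnat d i i')) : ℤ) + 1) * d i i = a := by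
              have := hd.symm i' i
              simp
              omega
            rwa [heq]
          · rw [Phi_single']
            rfl
      · -- both differ from i
        rw [hUj i' (Ne.symm hi') a, hUj j' (Ne.symm hj') (a - d i' j')]
        exact hx j' i' a
  · -- contains Im A
    intro j a
    rcases eq_or_ne i j with rfl | hj
    · rw [hUi (a + dl d i)]
      rintro _ ⟨w0, hw0, rfl⟩
      rw [SetLike.mem_coe] at hw0
      refine Submodule.mem_map.mpr ⟨(w0, 0), ?_, ?_⟩
      · rw [mem_Dg_iff']
        refine ⟨?_, fun j' k => zero_mem _⟩
        have heq : a + dl d i - d i i + dl d i = a := by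
          have := dl_add_dl d hd i; linarith
        rwa [heq]
      · rw [Phi_apply']
        simp
    · rw [hUj j (Ne.symm hj) (a + dl d j)]
      exact hA j a
end

section
/- For every point of P_{v,w}, every i ∈ I and every a ∈ ℤ, one has Φ_i^{a−d_{ii}} ∘ Υ_i^a = x_{i,i}^{a+d_{ii}} ∘ Φ_i^a as linear maps D_i^a → V_i^a. Consequently Υ_i^a(Ker Φ_i^a) ⊆ Ker Φ_i^{a−d_{ii}}. -/
/- Common setup: (graded, generalized) quiver varieties attached to a symmetrized
Cartan matrix, following Neguț, "Extremal monomials of q-characters". -/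

open Module LinearMap Finset

namespace QChar

variable {I : Type} [Fintype I] [DecidableEq I]

private lemma ite_apply_lm {M N : Type} [AddCommGroup M] [Module ℂ M] [AddCommGroup N]
    [Module ℂ N] (c : Prop) [Decidable c] (f g : M →ₗ[ℂ] N) (u : M) :
    (if c then f else g) u = if c then f u else g u := by split_ifs <;> rfl

private lemma lpow_succ_apply' {M : Type} [AddCommGroup M] [Module ℂ M]
    (f : M →ₗ[ℂ] M) (n : ℕ) (u : M) : lpow f (n + 1) u = f (lpow f n u) := rfl

private lemma cnat_mul (d : I → I → ℤ) (hd : CartanData d) {p q : I} (h : p ≠ q) :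
    (cnat d p q : ℤ) * d p p = -(2 * d p q) := by
  have h1 : cc d p q * d p p = 2 * d p q := Int.ediv_mul_cancel (hd.dvd p q)
  have hpos := hd.pos p
  have hle : 2 * d p q ≤ 0 := by linarith [hd.offdiag p q h]
  have hc : cc d p q ≤ 0 := by nlinarith
  have h2 : ((cnat d p q : ℤ)) = -(cc d p q) := by
    simp [cnat, Int.toNat_of_nonneg (by linarith : (0:ℤ) ≤ -(cc d p q))]
  rw [h2, neg_mul, h1]

private lemma cnat_self (d : I → I → ℤ) (hd : CartanData d) (i : I) : cnat d i i = 0 := by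
  have : cc d i i = 2 := by
    simp [cc, Int.mul_ediv_cancel 2 (ne_of_gt (hd.pos i))]
  simp [cnat, this]

private lemma cycle_sum {M N : Type} [AddCommGroup M] [Module ℂ M]
    [AddCommGroup N] [Module ℂ N]
    (e : M →ₗ[ℂ] M) (X : N →ₗ[ℂ] M) (g : N →ₗ[ℂ] N) (n : ℕ) (f : Fin n → N)
    (hrel : 0 < n → ∀ z, X (g z) = -(lpow e n (X z))) :
    ∑ k : Fin n, lpow e (k : ℕ)
      (X (if (k : ℕ) = 0 then -(g (f ⟨n - 1, Nat.sub_lt k.pos Nat.one_pos⟩))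
          else f ⟨(k : ℕ) - 1, lt_of_le_of_lt (Nat.sub_le _ _) k.isLt⟩)) =
    ∑ k : Fin n, lpow e ((k : ℕ) + 1) (X (f k)) := by
  cases n with
  | zero => simp
  | succ nn =>
    rw [Fin.sum_univ_succ, Fin.sum_univ_castSucc]
    rw [add_comm]
    congr 1
    simp only [Fin.val_zero, ite_true, eq_self_iff_true, if_true, map_neg,
      hrel (Nat.succ_pos nn), neg_neg, Fin.val_last, lpow, LinearMap.id_coe, id_eq,
      LinearMap.comp_apply]
    rfl

end QChar
open QChar in
/-- `Φ_i^{a-d_{ii}} ∘ Υ_i^a = x_{i,i}^{a+d_{ii}} ∘ Φ_i^a` on `D_i^a`, and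
consequently `Υ_i^a (Ker Φ_i^a) ⊆ Ker Φ_i^{a-d_{ii}}`. -/
theorem extremal_qchar_stmt2 {I : Type} [Fintype I] [DecidableEq I]
    (d : I → I → ℤ) (v w : I → ℤ → ℕ)
    (Vt : I → Type) [∀ i, AddCommGroup (Vt i)] [∀ i, Module ℂ (Vt i)]
    (Wt : I → Type) [∀ i, AddCommGroup (Wt i)] [∀ i, Module ℂ (Wt i)]
    (Vg : ∀ i : I, ℤ → Submodule ℂ (Vt i)) (Wg : ∀ i : I, ℤ → Submodule ℂ (Wt i))
    (x : ∀ j i : I, Vt i →ₗ[ℂ] Vt j) (A : ∀ i : I, Wt i →ₗ[ℂ] Vt i)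
    (B : ∀ i : I, Vt i →ₗ[ℂ] Wt i)
    (hd : QChar.CartanData d)
    (hv : (Function.support fun p : I × ℤ => v p.1 p.2).Finite)
    (hw : (Function.support fun p : I × ℤ => w p.1 p.2).Finite)
    (hrep : QChar.IsRep d v w Vt Wt Vg Wg x A B)
    (i : I) :
    QChar.Phi d Vt Wt x A i ∘ₗ QChar.Ups d Vt Wt x i
        = x i i ∘ₗ QChar.Phi d Vt Wt x A i ∧
      ∀ a : ℤ,
        ((QChar.Dg d Vt Wt Vg Wg i a ⊓ LinearMap.ker (QChar.Phi d Vt Wt x A i)).map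
            (QChar.Ups d Vt Wt x i))
          ≤ QChar.Dg d Vt Wt Vg Wg i (a - d i i) ⊓
              LinearMap.ker (QChar.Phi d Vt Wt x A i) := by
  obtain ⟨_, _, _, _, _, _, hx, hA, hB, hR1, hR2, hR3, hR4⟩ := hrep
  have part1 : QChar.Phi d Vt Wt x A i ∘ₗ QChar.Ups d Vt Wt x i
      = x i i ∘ₗ QChar.Phi d Vt Wt x A i := by
    refine LinearMap.ext fun u => ?_
    simp only [QChar.Phi, QChar.Ups, LinearMap.add_apply, LinearMap.comp_apply,
      LinearMap.coe_sum, Finset.sum_apply, LinearMap.prod_apply, Function.prod,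
      LinearMap.fst_apply, LinearMap.snd_apply, LinearMap.proj_apply, LinearMap.pi_apply,
      LinearMap.zero_apply, map_zero, map_add, map_sum, zero_add, QChar.ite_apply_lm,
      LinearMap.neg_apply]
    have hAx : x i i (A i u.1) = 0 := DFunLike.congr_fun (hR3 i) u.1
    rw [hAx, zero_add]
    refine Finset.sum_congr rfl fun j _ => ?_
    have := QChar.cycle_sum (x i i) (x i j) (QChar.lpow (x j j) (QChar.cnat d j i))
      (QChar.cnat d i j) (u.2 j) ?_
    · exact this.trans (Finset.sum_congr rfl fun k _ => QChar.lpow_succ_apply' _ _ _)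
    · intro hn z
      have hji : j ≠ i := by
        intro hji; subst hji; rw [QChar.cnat_self d hd j] at hn; exact absurd hn (lt_irrefl 0)
      have h1 := DFunLike.congr_fun (hR1 j i hji) z
      simp only [LinearMap.add_apply, LinearMap.comp_apply, LinearMap.zero_apply] at h1
      exact eq_neg_of_add_eq_zero_left ((add_comm _ _).trans h1)
  refine ⟨part1, fun a => ?_⟩
  rintro y hy
  obtain ⟨u, hu, rfl⟩ := Submodule.mem_map.mp hy
  obtain ⟨huD, huK⟩ := Submodule.mem_inf.mp hu
  refine Submodule.mem_inf.mpr ⟨?_, ?_⟩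
  · obtain ⟨hu1, hu2⟩ := Submodule.mem_prod.mp huD
    have hu2' : ∀ (j : I) (k : Fin (QChar.cnat d i j)),
        u.2 j k ∈ Vg j (a + d i j + ((k : ℤ) + 1) * d i i) := by
      intro j k
      exact Submodule.mem_pi.mp (Submodule.mem_pi.mp hu2 j (Set.mem_univ j)) k (Set.mem_univ k)
    have hlpow : ∀ (j : I) (m : ℕ) (b : ℤ) (z : Vt j), z ∈ Vg j b →
        QChar.lpow (x j j) m z ∈ Vg j (b - m * d j j) := by
      intro j m
      induction m with
      | zero => intro b z hz; simpa [QChar.lpow] using hz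
      | succ m ih =>
        intro b z hz
        have h1 := ih b z hz
        have h2 : x j j (QChar.lpow (x j j) m z) ∈ Vg j ((b - m * d j j) - d j j) :=
          hx j j _ (Submodule.mem_map_of_mem h1)
        have : QChar.lpow (x j j) (m + 1) z = x j j (QChar.lpow (x j j) m z) := rfl
        rw [this]
        convert h2 using 2
        push_cast; ring
    refine Submodule.mem_prod.mpr ⟨?_, ?_⟩
    · simp only [QChar.Ups, LinearMap.prod_apply, Function.prod, LinearMap.zero_apply]
      exact Submodule.zero_mem _
    · refine Submodule.mem_pi.mpr fun j _ => Submodule.mem_pi.mpr fun k _ => ?_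
      simp only [QChar.Ups, LinearMap.prod_apply, Function.prod, LinearMap.pi_apply,
        QChar.ite_apply_lm, LinearMap.neg_apply, LinearMap.comp_apply,
        LinearMap.proj_apply, LinearMap.snd_apply]
      split_ifs with hk
      · have hji : j ≠ i := by
          intro hji; subst hji
          rw [QChar.cnat_self d hd j] at k; exact absurd k.isLt (by simp)
        have hmem := hlpow j (QChar.cnat d j i) _ _
          (hu2' j ⟨QChar.cnat d i j - 1, Nat.sub_lt k.pos Nat.one_pos⟩)
        have hpos : 0 < QChar.cnat d i j := k.pos
        have hca : (((QChar.cnat d i j - 1 : ℕ) : ℤ)) + 1 = (QChar.cnat d i j : ℤ) := by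
          omega
        have h1 := QChar.cnat_mul d hd (Ne.symm hji)
        have h2 := QChar.cnat_mul d hd hji
        have hsym := hd.symm i j
        have hk' : ((k : ℕ) : ℤ) = 0 := by exact_mod_cast hk
        have hidx : a - d i i + d i j + (((k : ℕ) : ℤ) + 1) * d i i
            = (a + d i j + ((((QChar.cnat d i j - 1 : ℕ) : ℤ)) + 1) * d i i)
              - (QChar.cnat d j i : ℤ) * d j j := by
          rw [hk', hca, h1, h2]; ring_nf; linarith [hsym]
        rw [hidx]
        exact Submodule.neg_mem _ hmem
      · have hmem := hu2' j ⟨(k : ℕ) - 1, lt_of_le_of_lt (Nat.sub_le _ _) k.isLt⟩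
        have hkpos : 0 < (k : ℕ) := Nat.pos_of_ne_zero hk
        have hc : ((((k : ℕ) - 1 : ℕ)) : ℤ) + 1 = ((k : ℕ) : ℤ) := by omega
        have hidx : a - d i i + d i j + (((k : ℕ) : ℤ) + 1) * d i i
            = a + d i j + (((((k : ℕ) - 1 : ℕ)) : ℤ) + 1) * d i i := by
          rw [hc]; ring
        rw [hidx]
        exact hmem
  · have h1 : QChar.Phi d Vt Wt x A i (QChar.Ups d Vt Wt x i u)
        = x i i (QChar.Phi d Vt Wt x A i u) := DFunLike.congr_fun part1 u
    have h2 : QChar.Phi d Vt Wt x A i u = 0 := LinearMap.mem_ker.mp huK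
    rw [LinearMap.mem_ker, h1, h2, map_zero]
end
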